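/- arXiv:1904.06373 — 5 statements merged into one kernel-verified Lean document; each statement's English description precedes it below -/
import Mathlib

section
/- Under the assumptions of the perceptron-style AP-loss convergence proof (linear separability with margin ε, θ^{(0)} = 0), after t update steps the inner product satisfies ⟨θ^{(t)}, θ*⟩ ≥ (ε/M)·t, where M bounds the number of boxes per sample. -/
open scoped RealInnerProductSpace

/-- Heaviside step function: `H x = 1` for `x ≥ 0`, `0` otherwise. -/
noncomputable def Hstep (x : ℝ) : ℝ := if 0 ≤ x then 1 else 0

/-- In the perceptron-style AP-loss convergence setting (linear separability
with margin `ε`, `θ⁽⁰⁾ = 0`, at most `M` boxes per sample), after `t` update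
steps on erroneous samples, `⟨θ⁽ᵗ⁾, θ*⟩ ≥ (ε/M)·t`. -/
theorem stmt3 {d : ℕ} {σ ι : Type*} [Fintype σ] [Fintype ι] [DecidableEq ι]
    (f : σ → ι → EuclideanSpace ℝ (Fin d))
    (Pos Neg : σ → Finset ι) (hdisj : ∀ n, Disjoint (Pos n) (Neg n))
    (M : ℕ) (hM : 1 ≤ M) (hcard : ∀ n, (Pos n ∪ Neg n).card ≤ M)
    (ε : ℝ) (hε : 0 < ε)
    (θstar : EuclideanSpace ℝ (Fin d))
    (hsep : ∀ n, ∀ i ∈ Pos n, ∀ j ∈ Neg n, ⟪f n j, θstar⟫ + ε ≤ ⟪f n i, θstar⟫)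
    (T : ℕ) (θ : ℕ → EuclideanSpace ℝ (Fin d)) (hθ0 : θ 0 = 0)
    (samp : ℕ → σ)
    (herr : ∀ t < T, ∃ i ∈ Pos (samp t), ∃ j ∈ Neg (samp t),
      (0 : ℝ) ≤ ⟪f (samp t) j - f (samp t) i, θ t⟫)
    (hupd : ∀ t < T, θ (t + 1) = θ t +
      ∑ i ∈ Pos (samp t), ∑ j ∈ Neg (samp t),
        (Hstep ⟪f (samp t) j - f (samp t) i, θ t⟫ /
          (1 + ∑ k ∈ (Pos (samp t) ∪ Neg (samp t)).erase i,
            Hstep ⟪f (samp t) k - f (samp t) i, θ t⟫)) •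
          (f (samp t) i - f (samp t) j)) :
    (ε / (M : ℝ)) * (T : ℝ) ≤ ⟪θ T, θstar⟫ := by
  have hMpos : (0:ℝ) < M := by exact_mod_cast hM
  have hHnn : ∀ x : ℝ, 0 ≤ Hstep x := by
    intro x; unfold Hstep; split <;> norm_num
  have hHle : ∀ x : ℝ, Hstep x ≤ 1 := by
    intro x; unfold Hstep; split <;> norm_num
  have key : ∀ t < T, ⟪θ t, θstar⟫ + ε / M ≤ ⟪θ (t+1), θstar⟫ := by
    intro t ht
    obtain ⟨i0, hi0, j0, hj0, hH⟩ := herr t ht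
    set n := samp t with hn
    set S : ι → ℝ := fun i => ∑ k ∈ (Pos n ∪ Neg n).erase i,
        Hstep ⟪f n k - f n i, θ t⟫ with hS
    set L : ι → ι → ℝ := fun i j => Hstep ⟪f n j - f n i, θ t⟫ / (1 + S i) with hL
    have hSnn : ∀ i, 0 ≤ S i := fun i => Finset.sum_nonneg (fun k _ => hHnn _)
    have hden : ∀ i, (0:ℝ) < 1 + S i := fun i => by linarith [hSnn i]
    have hLnn : ∀ i j, 0 ≤ L i j := fun i j =>
      div_nonneg (hHnn _) (le_of_lt (hden i))
    have hinner : ∀ i ∈ Pos n, ∀ j ∈ Neg n,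
        ε ≤ ⟪f n i - f n j, θstar⟫ := by
      intro i hi j hj
      rw [inner_sub_left]
      have := hsep n i hi j hj
      linarith
    rw [hupd t ht, inner_add_left, sum_inner]
    have htermnn : ∀ i ∈ Pos n, 0 ≤ ⟪∑ j ∈ Neg n, L i j • (f n i - f n j), θstar⟫ := by
      intro i hi
      rw [sum_inner]
      refine Finset.sum_nonneg fun j hj => ?_
      rw [real_inner_smul_left]
      exact mul_nonneg (hLnn i j) (le_trans (le_of_lt hε) (hinner i hi j hj))
    have hmain : ε / M ≤ ⟪∑ j ∈ Neg n, L i0 j • (f n i0 - f n j), θstar⟫ := by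
      rw [sum_inner]
      have hsingle : L i0 j0 * ⟪f n i0 - f n j0, θstar⟫ ≤
          ∑ j ∈ Neg n, ⟪L i0 j • (f n i0 - f n j), θstar⟫ := by
        have hnn : ∀ j ∈ Neg n, 0 ≤ ⟪L i0 j • (f n i0 - f n j), θstar⟫ := by
          intro j hj
          rw [real_inner_smul_left]
          exact mul_nonneg (hLnn i0 j) (le_trans (le_of_lt hε) (hinner i0 hi0 j hj))
        have h := Finset.single_le_sum hnn hj0
        rwa [real_inner_smul_left] at h
      refine le_trans ?_ hsingle
      have hH1 : Hstep ⟪f n j0 - f n i0, θ t⟫ = 1 := by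
        unfold Hstep; rw [if_pos hH]
      have hcard' : S i0 ≤ (M : ℝ) - 1 := by
        have h1 : S i0 ≤ (((Pos n ∪ Neg n).erase i0).card : ℝ) := by
          rw [hS]
          calc ∑ k ∈ (Pos n ∪ Neg n).erase i0, Hstep ⟪f n k - f n i0, θ t⟫
              ≤ ∑ _k ∈ (Pos n ∪ Neg n).erase i0, (1:ℝ) :=
                Finset.sum_le_sum (fun k _ => hHle _)
            _ = (((Pos n ∪ Neg n).erase i0).card : ℝ) := by simp
        have h2 : ((Pos n ∪ Neg n).erase i0).card = (Pos n ∪ Neg n).card - 1 :=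
          Finset.card_erase_of_mem (Finset.mem_union_left _ hi0)
        have h3 : 1 ≤ (Pos n ∪ Neg n).card :=
          Finset.card_pos.mpr ⟨i0, Finset.mem_union_left _ hi0⟩
        have h5 : ((Pos n ∪ Neg n).card : ℝ) ≤ (M : ℝ) := by exact_mod_cast hcard n
        have h4 : (((Pos n ∪ Neg n).erase i0).card : ℝ) ≤ (M : ℝ) - 1 := by
          rw [h2, Nat.cast_sub h3]
          push_cast
          linarith
        linarith
      have hLge : 1 / (M:ℝ) ≤ L i0 j0 := by
        have : L i0 j0 = 1 / (1 + S i0) := by rw [hL]; simp only; rw [hH1]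
        rw [this]
        exact one_div_le_one_div_of_le (hden i0) (by linarith)
      have hin := hinner i0 hi0 j0 hj0
      have heq : ε / M = (1/(M:ℝ)) * ε := by ring
      rw [heq]
      exact mul_le_mul hLge hin (le_of_lt hε) (hLnn i0 j0)
    have := Finset.single_le_sum htermnn hi0
    linarith
  have main : ∀ t, t ≤ T → (ε / M) * t ≤ ⟪θ t, θstar⟫ := by
    intro t
    induction t with
    | zero => intro _; simp [hθ0]
    | succ m ih =>
      intro h
      have hm : m < T := h
      have h1 := key m hm
      have h2 := ih (le_of_lt hm)
      push_cast
      nlinarith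
  exact main T le_rfl
end

section
/- The smoothed AP-loss can fail gradient descent: for the linear model s = f₁θ₁ + f₂θ₂ with training samples (0,0) negative, (1,0) and (−3,1) positive, sigmoid-smoothed AP loss F(θ₁,θ₂) = (1/2)[S(−θ₁)/(1+S(−θ₁)+S(θ₂−4θ₁)) + S(3θ₁−θ₂)/(1+S(4θ₁−θ₂)+S(3θ₁−θ₂))] with S(x)=eˣ/(1+eˣ), the infimum of F is 0 but lim F(θ₁,θ₂) = 1/6 as θ₁ → ∞ with θ₁ > θ₂ > 0. -/
open Filter

/-- Logistic sigmoid. -/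
noncomputable def Sgm (x : ℝ) : ℝ := Real.exp x / (1 + Real.exp x)

/-- The sigmoid-smoothed AP-loss of the counterexample. -/
noncomputable def Fap (θ₁ θ₂ : ℝ) : ℝ :=
  (1 / 2) * (Sgm (-θ₁) / (1 + Sgm (-θ₁) + Sgm (θ₂ - 4 * θ₁)) +
    Sgm (3 * θ₁ - θ₂) / (1 + Sgm (4 * θ₁ - θ₂) + Sgm (3 * θ₁ - θ₂)))

lemma Sgm_pos (x : ℝ) : 0 < Sgm x := by unfold Sgm; positivity

lemma Sgm_tendsto_atTop : Tendsto Sgm atTop (nhds 1) := by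
  have heq : Sgm = fun x => 1 - (1 + Real.exp x)⁻¹ := by
    funext x
    have h : (1 : ℝ) + Real.exp x ≠ 0 := by positivity
    unfold Sgm
    field_simp
    ring
  rw [heq]
  have h : Tendsto (fun x => (1 + Real.exp x)⁻¹) atTop (nhds 0) :=
    (tendsto_atTop_add_const_left _ 1 Real.tendsto_exp_atTop).inv_tendsto_atTop
  simpa using tendsto_const_nhds.sub h

lemma Sgm_tendsto_atBot : Tendsto Sgm atBot (nhds 0) := by
  have h0 : Tendsto Real.exp atBot (nhds 0) := Real.tendsto_exp_atBot
  have hd : Tendsto (fun x => 1 + Real.exp x) atBot (nhds 1) := by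
    simpa using tendsto_const_nhds.add h0
  have h := h0.div hd one_ne_zero
  rw [zero_div] at h
  exact h

lemma Fap_tendsto (a b : ℕ → ℝ) (s t u v : ℝ)
    (h1 : Tendsto (fun n => Sgm (-(a n))) atTop (nhds s))
    (h2 : Tendsto (fun n => Sgm (b n - 4 * a n)) atTop (nhds t))
    (h3 : Tendsto (fun n => Sgm (4 * a n - b n)) atTop (nhds u))
    (h4 : Tendsto (fun n => Sgm (3 * a n - b n)) atTop (nhds v))
    (ht : 1 + s + t ≠ 0) (hv : 1 + u + v ≠ 0) :
    Tendsto (fun n => Fap (a n) (b n)) atTop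
      (nhds ((1 / 2) * (s / (1 + s + t) + v / (1 + u + v)))) := by
  unfold Fap
  exact tendsto_const_nhds.mul
    ((h1.div ((tendsto_const_nhds.add h1).add h2) ht).add
      (h4.div ((tendsto_const_nhds.add h3).add h4) hv))

/-- The infimum of the smoothed AP-loss `F` is `0`, but along any path with
`θ₁ → +∞` and `θ₁ > θ₂ > 0`, `F(θ₁, θ₂) → 1/6`: gradient descent can fail. -/
theorem stmt5 :
    IsGLB (Set.range fun p : ℝ × ℝ => Fap p.1 p.2) 0 ∧
    ∀ a b : ℕ → ℝ, Filter.Tendsto a Filter.atTop Filter.atTop →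
      (∀ n, b n < a n) → (∀ n, 0 < b n) →
      Filter.Tendsto (fun n => Fap (a n) (b n)) Filter.atTop (nhds (1 / 6)) := by
  constructor
  · constructor
    · rintro x ⟨p, rfl⟩
      have h1 := Sgm_pos (-p.1)
      have h2 := Sgm_pos (p.2 - 4 * p.1)
      have h3 := Sgm_pos (4 * p.1 - p.2)
      have h4 := Sgm_pos (3 * p.1 - p.2)
      unfold Fap
      positivity
    · intro w hw
      -- use the path (n, 5n)
      set a : ℕ → ℝ := fun n => (n : ℝ) with ha_def
      have ha : Tendsto a atTop atTop := tendsto_natCast_atTop_atTop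
      have hbot : ∀ (c : ℕ → ℝ), Tendsto c atTop atBot →
          Tendsto (fun n => Sgm (c n)) atTop (nhds 0) :=
        fun c hc => Sgm_tendsto_atBot.comp hc
      have htop : ∀ (c : ℕ → ℝ), Tendsto c atTop atTop →
          Tendsto (fun n => Sgm (c n)) atTop (nhds 1) :=
        fun c hc => Sgm_tendsto_atTop.comp hc
      have h1 : Tendsto (fun n => Sgm (-(a n))) atTop (nhds 0) :=
        hbot _ (tendsto_neg_atTop_atBot.comp ha)
      have h2 : Tendsto (fun n => Sgm (5 * a n - 4 * a n)) atTop (nhds 1) := by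
        have : Tendsto (fun n => 5 * a n - 4 * a n) atTop atTop := by
          have : (fun n => 5 * a n - 4 * a n) = a := by funext n; ring
          rw [this]; exact ha
        exact htop _ this
      have hneg : Tendsto (fun n => -(a n)) atTop atBot := tendsto_neg_atTop_atBot.comp ha
      have h3 : Tendsto (fun n => Sgm (4 * a n - 5 * a n)) atTop (nhds 0) := by
        have : Tendsto (fun n => 4 * a n - 5 * a n) atTop atBot := by
          have : (fun n => 4 * a n - 5 * a n) = fun n => -(a n) := by funext n; ring
          rw [this]; exact hneg
        exact hbot _ this
      have h4 : Tendsto (fun n => Sgm (3 * a n - 5 * a n)) atTop (nhds 0) := by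
        have : Tendsto (fun n => 3 * a n - 5 * a n) atTop atBot := by
          have h2a : Tendsto (fun n => 2 * a n) atTop atTop :=
            ha.const_mul_atTop (by norm_num)
          have : (fun n => 3 * a n - 5 * a n) = fun n => -(2 * a n) := by funext n; ring
          rw [this]; exact tendsto_neg_atTop_atBot.comp h2a
        exact hbot _ this
      have hlim := Fap_tendsto a (fun n => 5 * a n) 0 1 0 0 h1 h2 h3 h4
        (by norm_num) (by norm_num)
      have hlim' : Tendsto (fun n => Fap (a n) (5 * a n)) atTop (nhds 0) := by
        convert hlim using 2; norm_num
      exact ge_of_tendsto' hlim' fun n => hw ⟨(a n, 5 * a n), rfl⟩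
  · intro a b ha hba hb
    have hbot : ∀ (c : ℕ → ℝ), Tendsto c atTop atBot →
        Tendsto (fun n => Sgm (c n)) atTop (nhds 0) :=
      fun c hc => Sgm_tendsto_atBot.comp hc
    have htop : ∀ (c : ℕ → ℝ), Tendsto c atTop atTop →
        Tendsto (fun n => Sgm (c n)) atTop (nhds 1) :=
      fun c hc => Sgm_tendsto_atTop.comp hc
    have h1 : Tendsto (fun n => Sgm (-(a n))) atTop (nhds 0) :=
      hbot _ (tendsto_neg_atTop_atBot.comp ha)
    have h3a : Tendsto (fun n => 3 * a n) atTop atTop := ha.const_mul_atTop (by norm_num)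
    have h2a : Tendsto (fun n => 2 * a n) atTop atTop := ha.const_mul_atTop (by norm_num)
    have h2 : Tendsto (fun n => Sgm (b n - 4 * a n)) atTop (nhds 0) := by
      refine hbot _ (tendsto_atBot_mono (fun n => ?_)
        (tendsto_neg_atTop_atBot.comp h3a))
      have := (hba n).le
      simp only [Function.comp]
      nlinarith
    have h3 : Tendsto (fun n => Sgm (4 * a n - b n)) atTop (nhds 1) := by
      refine htop _ (tendsto_atTop_mono (fun n => ?_) h3a)
      nlinarith [(hba n).le]
    have h4 : Tendsto (fun n => Sgm (3 * a n - b n)) atTop (nhds 1) := by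
      refine htop _ (tendsto_atTop_mono (fun n => ?_) h2a)
      nlinarith [(hba n).le]
    have hlim := Fap_tendsto a b 0 0 1 1 h1 h2 h3 h4 (by norm_num) (by norm_num)
    convert hlim using 2; norm_num
end

section
/- For the function F(θ₁,θ₂) = (1/2)[S(−θ₁)/(1+S(−θ₁)+S(θ₂−4θ₁)) + S(3θ₁−θ₂)/(1+S(4θ₁−θ₂)+S(3θ₁−θ₂))] with S the logistic sigmoid, F(θ₁,θ₂) → 0 if and only if θ₁ → +∞ and θ₂ − 3θ₁ → +∞; in particular inf F = 0 and F > 0 everywhere. -/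
/-!
Each denominator of `F` lies in `[1, 3]`, so `F` is squeezed between `c/6` and `c/2`, where
`c = S(-θ₁) + S(3θ₁ - θ₂)` is a sum of two positive terms. Hence `F → 0` iff both
sigmoids tend to `0`, i.e. iff `-θ₁ → -∞` and `3θ₁ - θ₂ → -∞`.
-/

open Filter Topology Real

section Tendsto

variable {α : Type*} {l : Filter α}

lemma tendsto_add_nhds_zero_iff_of_nonneg {f g : α → ℝ} (hf : ∀ i, 0 ≤ f i)
    (hg : ∀ i, 0 ≤ g i) :
    Tendsto (fun i => f i + g i) l (𝓝 0) ↔ Tendsto f l (𝓝 0) ∧ Tendsto g l (𝓝 0) := by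
  refine ⟨fun h => ⟨?_, ?_⟩, fun ⟨hf₀, hg₀⟩ => by simpa using hf₀.add hg₀⟩
  · exact squeeze_zero hf (fun i => le_add_of_nonneg_right (hg i)) h
  · exact squeeze_zero hg (fun i => le_add_of_nonneg_left (hf i)) h

lemma tendsto_nhds_zero_of_le_const_mul {f g : α → ℝ} {C : ℝ} (hf : ∀ i, 0 ≤ f i)
    (hfg : ∀ i, f i ≤ C * g i) (hg : Tendsto g l (𝓝 0)) : Tendsto f l (𝓝 0) :=
  squeeze_zero hf hfg (by simpa using hg.const_mul C)

lemma tendsto_sigmoid_comp_nhds_zero_iff {f : α → ℝ} :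
    Tendsto (fun i => sigmoid (f i)) l (𝓝 0) ↔ Tendsto f l atBot := by
  refine ⟨fun h => tendsto_atBot.2 fun b => ?_, tendsto_sigmoid_atBot.comp⟩
  filter_upwards [h.eventually (gt_mem_nhds (sigmoid_pos b))] with i hi
  exact (sigmoid_lt_iff.1 hi).le

end Tendsto

lemma Sgm_eq_sigmoid : Sgm = sigmoid := by
  funext x
  rw [Sgm, sigmoid_def, exp_neg]
  field_simp
  ring

lemma Fap_bounds (θ₁ θ₂ : ℝ) :
    (sigmoid (-θ₁) + sigmoid (3 * θ₁ - θ₂)) / 6 ≤ Fap θ₁ θ₂ ∧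
      Fap θ₁ θ₂ ≤ (sigmoid (-θ₁) + sigmoid (3 * θ₁ - θ₂)) / 2 := by
  have term_bounds : ∀ x y z : ℝ, sigmoid x / 3 ≤ sigmoid x / (1 + sigmoid y + sigmoid z) ∧
      sigmoid x / (1 + sigmoid y + sigmoid z) ≤ sigmoid x := fun x y z =>
    have hy := sigmoid_le_one y
    have hz := sigmoid_le_one z
    have hden : 1 ≤ 1 + sigmoid y + sigmoid z := by linarith [sigmoid_pos y, sigmoid_pos z]
    ⟨div_le_div_of_nonneg_left (sigmoid_nonneg x) (by linarith) (by linarith),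
      div_le_self (sigmoid_nonneg x) hden⟩
  have h₁ := term_bounds (-θ₁) (-θ₁) (θ₂ - 4 * θ₁)
  have h₂ := term_bounds (3 * θ₁ - θ₂) (4 * θ₁ - θ₂) (3 * θ₁ - θ₂)
  rw [Fap, Sgm_eq_sigmoid]
  constructor <;> linarith [h₁.1, h₁.2, h₂.1, h₂.2]

lemma Fap_pos (θ₁ θ₂ : ℝ) : 0 < Fap θ₁ θ₂ :=
  (div_pos (add_pos (sigmoid_pos _) (sigmoid_pos _)) (by norm_num)).trans_le
    (Fap_bounds θ₁ θ₂).1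

theorem tendsto_Fap_nhds_zero_iff {α : Type*} {l : Filter α} {a b : α → ℝ} :
    Tendsto (fun i => Fap (a i) (b i)) l (𝓝 0) ↔
      Tendsto a l atTop ∧ Tendsto (fun i => b i - 3 * a i) l atTop := by
  set c : α → ℝ := fun i => sigmoid (-a i) + sigmoid (3 * a i - b i)
  have hc : Tendsto (fun i => Fap (a i) (b i)) l (𝓝 0) ↔ Tendsto c l (𝓝 0) :=
    ⟨tendsto_nhds_zero_of_le_const_mul (C := 6)
      (fun i => add_nonneg (sigmoid_nonneg _) (sigmoid_nonneg _))
      (fun i => by linarith [(Fap_bounds (a i) (b i)).1]),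
     tendsto_nhds_zero_of_le_const_mul (C := 1 / 2) (fun i => (Fap_pos _ _).le)
      (fun i => by linarith [(Fap_bounds (a i) (b i)).2])⟩
  rw [hc,
    tendsto_add_nhds_zero_iff_of_nonneg (fun _ => sigmoid_nonneg _) (fun _ => sigmoid_nonneg _),
    tendsto_sigmoid_comp_nhds_zero_iff, tendsto_sigmoid_comp_nhds_zero_iff]
  simp_rw [← neg_sub (b _), tendsto_neg_atBot_iff]

/-- `F > 0` everywhere, `inf F = 0`, and `F → 0` along a sequence iff
`θ₁ → +∞` and `θ₂ - 3θ₁ → +∞`. -/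
theorem stmt6 :
    (∀ θ₁ θ₂ : ℝ, 0 < Fap θ₁ θ₂) ∧
    IsGLB (Set.range fun p : ℝ × ℝ => Fap p.1 p.2) 0 ∧
    ∀ a b : ℕ → ℝ,
      (Filter.Tendsto (fun n => Fap (a n) (b n)) Filter.atTop (nhds 0) ↔
        (Filter.Tendsto a Filter.atTop Filter.atTop ∧
         Filter.Tendsto (fun n => b n - 3 * a n) Filter.atTop Filter.atTop)) := by
  refine ⟨Fap_pos, ⟨?_, fun c hc => ?_⟩, fun a b => tendsto_Fap_nhds_zero_iff⟩
  · rintro _ ⟨p, rfl⟩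
    exact (Fap_pos p.1 p.2).le
  · have diagonal : Tendsto (fun t : ℝ => Fap t (4 * t)) atTop (𝓝 0) :=
      tendsto_Fap_nhds_zero_iff.2 ⟨tendsto_id, by ring_nf; exact tendsto_id⟩
    exact ge_of_tendsto diagonal (Eventually.of_forall fun t => hc ⟨(t, 4 * t), rfl⟩)
end

section
/- Online gradient descent regret bound for the AP surrogate loss: suppose for each t, l^{(t)}: ℝᵈ → ℝ is convex, nonnegative, and its gradient satisfies ‖∇l^{(t)}(θ)‖² ≤ (R²/δ)·l^{(t)}(θ) for all θ. Then gradient descent θ^{(t+1)} = θ^{(t)} − η∇l^{(t)}(θ^{(t)}) with step size η = δ/R² satisfies, for any comparator u, Σ_{t=1}^{T} l^{(t)}(θ^{(t)}) ≤ 2·Σ_{t=1}^{T} l^{(t)}(u) + (R²/δ)·‖u − θ^{(1)}‖². -/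
/-!
Convexity gives `⟪∇lₜ(θₜ), u - θₜ⟫ ≤ lₜ(u) - lₜ(θₜ)`, so expanding the square in the update
`θₜ₊₁ = θₜ - η ∇lₜ(θₜ)` yields
`‖u - θₜ₊₁‖² ≤ ‖u - θₜ‖² + 2η (lₜ(u) - lₜ(θₜ)) + η² ‖∇lₜ(θₜ)‖²`.
With `η = δ/R²` the self-bounding gradient gives `η² ‖∇lₜ(θₜ)‖² ≤ η lₜ(θₜ)`, which absorbs half of
the `-2η lₜ(θₜ)` term; summing over `t` telescopes the distances to `u`.
-/

open Set Finset InnerProductSpace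

section FirstOrderConvexity

variable {E : Type*} [NormedAddCommGroup E] [NormedSpace ℝ E] {s : Set E} {f : E → ℝ}
  {f' : E →L[ℝ] ℝ} {x y : E}

theorem ConvexOn.fderiv_sub_le (hf : ConvexOn ℝ s f) (hx : x ∈ s) (hy : y ∈ s)
    (hf' : HasFDerivAt f f' x) : f' (y - x) ≤ f y - f x := by
  have hφ : ConvexOn ℝ (AffineMap.lineMap (k := ℝ) x y ⁻¹' s) (f ∘ AffineMap.lineMap x y) :=
    hf.comp_affineMap _
  have hφ' : HasDerivAt (f ∘ AffineMap.lineMap (k := ℝ) x y) (f' (y - x)) 0 := by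
    refine HasFDerivAt.comp_hasDerivAt (0 : ℝ) ?_ AffineMap.hasDerivAt_lineMap
    simpa using hf'
  simpa [slope_def_field] using
    hφ.le_slope_of_hasDerivAt (by simpa using hx) (by simpa using hy) zero_lt_one hφ'

end FirstOrderConvexity

section GradientDescent

variable {E : Type*} [NormedAddCommGroup E] [InnerProductSpace ℝ E] [CompleteSpace E]

theorem ConvexOn.inner_gradient_sub_le {s : Set E} {f : E → ℝ} {g x y : E}
    (hf : ConvexOn ℝ s f) (hx : x ∈ s) (hy : y ∈ s) (hg : HasGradientAt f g x) :
    ⟪g, y - x⟫_ℝ ≤ f y - f x := by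
  simpa using hf.fderiv_sub_le hx hy hg.hasFDerivAt

theorem ConvexOn.gradient_step_le {f : E → ℝ} {g θ u : E} {η : ℝ}
    (hf : ConvexOn ℝ univ f) (hg : HasGradientAt f g θ) (hη : 0 ≤ η)
    (hbound : η * ‖g‖ ^ 2 ≤ f θ) :
    η * f θ ≤ ‖u - θ‖ ^ 2 - ‖u - (θ - η • g)‖ ^ 2 + 2 * η * f u := by
  have hexpand :
      ‖u - (θ - η • g)‖ ^ 2 = ‖u - θ‖ ^ 2 + 2 * η * ⟪g, u - θ⟫_ℝ + η * (η * ‖g‖ ^ 2) := by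
    rw [show u - (θ - η • g) = (u - θ) + η • g by abel, norm_add_sq_real, norm_smul,
      real_inner_smul_right, real_inner_comm, Real.norm_of_nonneg hη]
    ring
  have hinner := hf.inner_gradient_sub_le (mem_univ θ) (mem_univ u) hg
  linarith [mul_le_mul_of_nonneg_left hinner hη, mul_le_mul_of_nonneg_left hbound hη]

theorem sum_Icc_le_of_le_sub_succ_add {a b D : ℕ → ℝ} (h : ∀ t, a t ≤ D t - D (t + 1) + b t)
    (T : ℕ) : ∑ t ∈ Icc 1 T, a t ≤ D 1 - D (T + 1) + ∑ t ∈ Icc 1 T, b t := by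
  induction T with
  | zero => simp
  | succ T ih =>
    rw [sum_Icc_succ_top (by omega), sum_Icc_succ_top (by omega)]
    linarith [h (T + 1)]

theorem gradient_descent_regret_le {l : ℕ → E → ℝ} {θ : ℕ → E} {η : ℝ} (hη : 0 ≤ η)
    (hconv : ∀ t, ConvexOn ℝ univ (l t)) (hdiff : ∀ t, DifferentiableAt ℝ (l t) (θ t))
    (hgrad : ∀ t, η * ‖gradient (l t) (θ t)‖ ^ 2 ≤ l t (θ t))
    (hupd : ∀ t, θ (t + 1) = θ t - η • gradient (l t) (θ t)) (u : E) (T : ℕ) :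
    η * ∑ t ∈ Icc 1 T, l t (θ t) ≤ ‖u - θ 1‖ ^ 2 + 2 * η * ∑ t ∈ Icc 1 T, l t u := by
  have hstep (t : ℕ) :
      η * l t (θ t) ≤ ‖u - θ t‖ ^ 2 - ‖u - θ (t + 1)‖ ^ 2 + 2 * η * l t u := by
    rw [hupd t]
    exact (hconv t).gradient_step_le (hdiff t).hasGradientAt hη (hgrad t)
  have hsum := sum_Icc_le_of_le_sub_succ_add hstep T
  rw [mul_sum, mul_sum]
  linarith [sq_nonneg ‖u - θ (T + 1)‖]

end GradientDescent

theorem stmt10_general {d : ℕ} (R δ : ℝ) (hR : 0 < R) (hδ : 0 < δ)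
    (l : ℕ → EuclideanSpace ℝ (Fin d) → ℝ)
    (hconv : ∀ t, ConvexOn ℝ Set.univ (l t))
    (hdiff : ∀ t θ, DifferentiableAt ℝ (l t) θ)
    (hgrad : ∀ t θ, ‖gradient (l t) θ‖ ^ 2 ≤ (R ^ 2 / δ) * l t θ)
    (θ : ℕ → EuclideanSpace ℝ (Fin d)) (T : ℕ)
    (hupd : ∀ t, θ (t + 1) = θ t - (δ / R ^ 2) • gradient (l t) (θ t))
    (u : EuclideanSpace ℝ (Fin d)) :
    ∑ t ∈ Finset.Icc 1 T, l t (θ t) ≤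
      2 * ∑ t ∈ Finset.Icc 1 T, l t u + (R ^ 2 / δ) * ‖u - θ 1‖ ^ 2 := by
  have hη : 0 < δ / R ^ 2 := by positivity
  have hinv : R ^ 2 / δ = (δ / R ^ 2)⁻¹ := (inv_div _ _).symm
  have hgrad' (t : ℕ) : δ / R ^ 2 * ‖gradient (l t) (θ t)‖ ^ 2 ≤ l t (θ t) := by
    have := mul_le_mul_of_nonneg_left (hgrad t (θ t)) hη.le
    rwa [hinv, ← mul_assoc, mul_inv_cancel₀ hη.ne', one_mul] at this
  have hregret := gradient_descent_regret_le hη.le hconv (fun t => hdiff t (θ t)) hgrad' hupd u T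
  rw [hinv, ← mul_le_mul_iff_of_pos_left hη, mul_add, ← mul_assoc _ _⁻¹,
    mul_inv_cancel₀ hη.ne', one_mul]
  linarith

/-- Online gradient descent regret bound for the AP surrogate loss: if each
`l⁽ᵗ⁾` is convex, nonnegative, differentiable, with self-bounding gradient
`‖∇l⁽ᵗ⁾(θ)‖² ≤ (R²/δ)·l⁽ᵗ⁾(θ)`, then GD with step `η = δ/R²` satisfies
`Σ l⁽ᵗ⁾(θ⁽ᵗ⁾) ≤ 2 Σ l⁽ᵗ⁾(u) + (R²/δ)‖u - θ⁽¹⁾‖²`. -/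
theorem stmt10 {d : ℕ} (R δ : ℝ) (hR : 0 < R) (hδ : 0 < δ)
    (l : ℕ → EuclideanSpace ℝ (Fin d) → ℝ)
    (hconv : ∀ t, ConvexOn ℝ Set.univ (l t))
    (hnonneg : ∀ t θ, 0 ≤ l t θ)
    (hdiff : ∀ t θ, DifferentiableAt ℝ (l t) θ)
    (hgrad : ∀ t θ, ‖gradient (l t) θ‖ ^ 2 ≤ (R ^ 2 / δ) * l t θ)
    (θ : ℕ → EuclideanSpace ℝ (Fin d)) (T : ℕ)
    (hupd : ∀ t, θ (t + 1) = θ t - (δ / R ^ 2) • gradient (l t) (θ t))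
    (u : EuclideanSpace ℝ (Fin d)) :
    ∑ t ∈ Finset.Icc 1 T, l t (θ t) ≤
      2 * ∑ t ∈ Finset.Icc 1 T, l t u + (R ^ 2 / δ) * ‖u - θ 1‖ ^ 2 :=
  stmt10_general R δ hR hδ l hconv hdiff hgrad θ T hupd u
end

section
/- Monotonicity of AP under a correcting swap: let P, N be disjoint finite sets with distinct scores s. If i ∈ P and j ∈ N with s_i < s_j, then swapping the scores of i and j (so i gets s_j and j gets s_i) does not decrease AP = (1/|P|) Σ_{p∈P} rank⁺(p)/rank(p), where rank(p) counts samples with score ≥ s_p and rank⁺(p) counts positive samples with score ≥ s_p. -/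
open Finset

private lemma aux_num16 (m a r R : ℝ) (hm : 0 ≤ m) (ha : 0 ≤ a) (hr : 1 ≤ r)
    (hR : r + 1 ≤ R) : (m + a + 1) / R ≤ (m + 1) / r + a / (R - 1) := by
  have hr0 : (0:ℝ) < r := by linarith
  have hR0 : (0:ℝ) < R := by linarith
  have hR1 : (0:ℝ) < R - 1 := by linarith
  rw [div_add_div _ _ (ne_of_gt hr0) (ne_of_gt hR1), div_le_div_iff₀ hR0 (by positivity)]
  nlinarith [mul_nonneg (mul_nonneg (by linarith : (0:ℝ) ≤ m + 1) hR1.le)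
      (by linarith : (0:ℝ) ≤ R - r), mul_nonneg ha hr0.le]

/-- Swapping the scores of a misordered positive-negative pair
(`i ∈ P`, `j ∈ N`, `s_i < s_j`) does not decrease
`AP = (1/|P|) Σ_{p∈P} rank⁺(p)/rank(p)`. -/
theorem stmt16 {ι : Type*} [DecidableEq ι] (P N : Finset ι)
    (hPN : Disjoint P N) (hP : P.Nonempty)
    (s : ι → ℝ) (hdist : Set.InjOn s ↑(P ∪ N))
    (i j : ι) (hi : i ∈ P) (hj : j ∈ N) (hij : s i < s j)
    (s' : ι → ℝ)
    (hs' : s' = Function.update (Function.update s i (s j)) j (s i)) :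
    (1 / (P.card : ℝ)) * ∑ p ∈ P,
        (((P.filter fun q => s p ≤ s q).card : ℝ) /
          (((P ∪ N).filter fun q => s p ≤ s q).card : ℝ))
    ≤ (1 / (P.card : ℝ)) * ∑ p ∈ P,
        (((P.filter fun q => s' p ≤ s' q).card : ℝ) /
          (((P ∪ N).filter fun q => s' p ≤ s' q).card : ℝ)) := by
  classical
  have hij' : i ≠ j := by
    intro h; exact Finset.disjoint_left.mp hPN hi (h ▸ hj)
  have hs'i : s' i = s j := by
    rw [hs', Function.update_of_ne hij', Function.update_self]
  have hs'j : s' j = s i := by rw [hs', Function.update_self]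
  have hs'o : ∀ q, q ≠ i → q ≠ j → s' q = s q := by
    intro q h1 h2
    rw [hs', Function.update_of_ne h2, Function.update_of_ne h1]
  have hiU : i ∈ P ∪ N := mem_union_left _ hi
  have hjU : j ∈ P ∪ N := mem_union_right _ hj
  have hjP : j ∉ P := fun h => Finset.disjoint_left.mp hPN h hj
  -- rank (over the whole union) is invariant under the swap
  have hrk : ∀ c : ℝ, ((P ∪ N).filter fun q => c ≤ s' q).card
      = ((P ∪ N).filter fun q => c ≤ s q).card := by
    intro c
    apply Finset.card_bij' (fun q _ => Equiv.swap i j q) (fun q _ => Equiv.swap i j q)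
    · intro q hq
      rcases mem_filter.mp hq with ⟨hqU, hle⟩
      rcases eq_or_ne q i with rfl | h1
      · refine mem_filter.mpr ⟨by simpa [Equiv.swap_apply_left] using hjU, ?_⟩
        rw [Equiv.swap_apply_left]; rwa [hs'i] at hle
      rcases eq_or_ne q j with rfl | h2
      · refine mem_filter.mpr ⟨by simpa [Equiv.swap_apply_right] using hiU, ?_⟩
        rw [Equiv.swap_apply_right]; rwa [hs'j] at hle
      · refine mem_filter.mpr ⟨?_, ?_⟩
        · rwa [Equiv.swap_apply_of_ne_of_ne h1 h2]
        · rw [Equiv.swap_apply_of_ne_of_ne h1 h2]; rwa [hs'o q h1 h2] at hle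
    · intro q hq
      rcases mem_filter.mp hq with ⟨hqU, hle⟩
      rcases eq_or_ne q i with rfl | h1
      · refine mem_filter.mpr ⟨by simpa [Equiv.swap_apply_left] using hjU, ?_⟩
        rw [Equiv.swap_apply_left, hs'j]; exact hle
      rcases eq_or_ne q j with rfl | h2
      · refine mem_filter.mpr ⟨by simpa [Equiv.swap_apply_right] using hiU, ?_⟩
        rw [Equiv.swap_apply_right, hs'i]; exact hle
      · refine mem_filter.mpr ⟨?_, ?_⟩
        · rwa [Equiv.swap_apply_of_ne_of_ne h1 h2]
        · rw [Equiv.swap_apply_of_ne_of_ne h1 h2, hs'o q h1 h2]; exact hle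
    · intro q _; exact Equiv.swap_apply_self i j q
    · intro q _; exact Equiv.swap_apply_self i j q
  set P₀ := P.erase i with hP₀def
  have hiP₀ : i ∉ P₀ := notMem_erase i P
  have hmem : ∀ p ∈ P₀, p ∈ P ∪ N ∧ p ≠ i ∧ p ≠ j := by
    intro p hp
    have hpP : p ∈ P := mem_of_mem_erase hp
    exact ⟨mem_union_left _ hpP, ne_of_mem_erase hp, fun h => hjP (h ▸ hpP)⟩
  have hsne : ∀ p ∈ P₀, s p ≠ s i ∧ s p ≠ s j := by
    intro p hp
    obtain ⟨hpU, hpi, hpj⟩ := hmem p hp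
    exact ⟨fun h => hpi (hdist (mem_coe.mpr hpU) (mem_coe.mpr hiU) h),
           fun h => hpj (hdist (mem_coe.mpr hpU) (mem_coe.mpr hjU) h)⟩
  -- positive-count after swap
  have hnum' : ∀ c : ℝ, (P.filter fun q => c ≤ s' q).card
      = (P₀.filter fun q => c ≤ s q).card + (if c ≤ s j then 1 else 0) := by
    intro c
    have h1 : P₀.filter (fun q => c ≤ s' q) = P₀.filter (fun q => c ≤ s q) :=
      filter_congr fun q hq => by rw [hs'o q (hmem q hq).2.1 (hmem q hq).2.2]
    have h2 : (P.filter fun q => c ≤ s' q) = ((insert i P₀).filter fun q => c ≤ s' q) := by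
      rw [insert_erase hi]
    rw [h2, filter_insert]
    by_cases h : c ≤ s j
    · rw [if_pos (by rwa [hs'i]), if_pos h,
        card_insert_of_notMem (fun hm => hiP₀ (mem_of_mem_filter _ hm)), h1]
    · rw [if_neg (by rwa [hs'i]), if_neg h, h1, Nat.add_zero]
  -- positive-count before swap
  have hnum : ∀ c : ℝ, (P.filter fun q => c ≤ s q).card
      = (P₀.filter fun q => c ≤ s q).card + (if c ≤ s i then 1 else 0) := by
    intro c
    have h2 : (P.filter fun q => c ≤ s q) = ((insert i P₀).filter fun q => c ≤ s q) := by
      rw [insert_erase hi]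
    rw [h2, filter_insert]
    by_cases h : c ≤ s i
    · rw [if_pos h, if_pos h,
        card_insert_of_notMem (fun hm => hiP₀ (mem_of_mem_filter _ hm))]
    · rw [if_neg h, if_neg h, Nat.add_zero]
  -- rank positivity and gaps
  have hrpos : ∀ p ∈ P ∪ N, 0 < ((P ∪ N).filter fun q => s p ≤ s q).card :=
    fun p hp => card_pos.mpr ⟨p, mem_filter.mpr ⟨hp, le_refl _⟩⟩
  have hrkle : ∀ p : ι, s i < s p →
      ((P ∪ N).filter fun q => s p ≤ s q).card + 1
        ≤ ((P ∪ N).filter fun q => s i ≤ s q).card := by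
    intro p hp
    have hni : i ∉ (P ∪ N).filter fun q => s p ≤ s q := by
      intro h; rcases mem_filter.mp h with ⟨_, h2⟩; linarith
    have hsub : insert i ((P ∪ N).filter fun q => s p ≤ s q)
        ⊆ (P ∪ N).filter fun q => s i ≤ s q := by
      refine insert_subset (mem_filter.mpr ⟨hiU, le_refl _⟩) ?_
      intro q hq; rcases mem_filter.mp hq with ⟨h1, h2⟩
      exact mem_filter.mpr ⟨h1, by linarith⟩
    calc ((P ∪ N).filter fun q => s p ≤ s q).card + 1
        = (insert i ((P ∪ N).filter fun q => s p ≤ s q)).card :=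
          (card_insert_of_notMem hni).symm
      _ ≤ _ := card_le_card hsub
  set A : Finset ι := P₀.filter fun p => s i < s p ∧ s p ≤ s j with hAdef
  set Mn : ℕ := (P₀.filter fun q => s j ≤ s q).card with hMdef
  set Rn : ℕ := ((P ∪ N).filter fun q => s i ≤ s q).card with hRdef
  set rn : ℕ := ((P ∪ N).filter fun q => s j ≤ s q).card with hrdef
  have hg : (P₀.filter fun q => s i ≤ s q).card = Mn + A.card := by
    have heq : P₀.filter (fun q => s i ≤ s q)
        = (P₀.filter fun q => s j ≤ s q) ∪ A := by
      rw [hAdef, ← filter_or]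
      refine filter_congr fun p hp => ?_
      obtain ⟨h1, h2⟩ := hsne p hp
      constructor
      · intro h
        by_cases hc : s j ≤ s p
        · exact Or.inl hc
        · exact Or.inr ⟨lt_of_le_of_ne h (Ne.symm h1), le_of_not_ge hc⟩
      · rintro (h | ⟨h, _⟩) <;> linarith
    rw [heq, card_union_of_disjoint]
    rw [disjoint_left]
    intro p hp1 hp2
    rcases mem_filter.mp hp1 with ⟨hpP₀, hle⟩
    rcases mem_filter.mp hp2 with ⟨_, _, hle'⟩
    exact (hsne p hpP₀).2 (le_antisymm hle' hle)
  -- reduce to the sum inequality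
  apply mul_le_mul_of_nonneg_left _ (by positivity)
  rw [← Finset.add_sum_erase P _ hi, ← Finset.add_sum_erase P _ hi]
  -- rewrite the terms over P₀
  have hterm : ∀ p ∈ P₀,
      (((P.filter fun q => s' p ≤ s' q).card : ℝ) /
        (((P ∪ N).filter fun q => s' p ≤ s' q).card : ℝ))
      = (((P.filter fun q => s p ≤ s q).card : ℝ) /
          (((P ∪ N).filter fun q => s p ≤ s q).card : ℝ))
        + (if s i < s p ∧ s p ≤ s j then
            (1:ℝ) / (((P ∪ N).filter fun q => s p ≤ s q).card : ℝ) else 0) := by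
    intro p hp
    obtain ⟨hpU, hpi, hpj⟩ := hmem p hp
    obtain ⟨h1, h2⟩ := hsne p hp
    rw [hs'o p hpi hpj, hrk (s p), hnum' (s p), hnum (s p)]
    push_cast
    by_cases hc1 : s p ≤ s i
    · rw [if_pos hc1, if_pos (by linarith : s p ≤ s j),
        if_neg (by intro h; exact absurd hc1 (not_le.mpr h.1))]
      ring
    · have hip : s i < s p := lt_of_not_ge hc1
      rw [if_neg hc1]
      by_cases hc2 : s p ≤ s j
      · rw [if_pos hc2, if_pos ⟨hip, hc2⟩]; ring
      · rw [if_neg hc2, if_neg (fun h => hc2 h.2)]; ring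
  rw [Finset.sum_congr rfl hterm, Finset.sum_add_distrib, ← Finset.sum_filter, ← hAdef]
  -- rewrite the i-terms
  rw [hnum' (s' i), hrk (s' i), hs'i, hnum (s i), if_pos (le_refl (s j)),
    if_pos (le_refl (s i)), hg]
  have hMn1 : (P₀.filter fun q => s j ≤ s q).card = Mn := rfl
  rw [hMn1]
  -- the key inequality
  have hr1 : 1 ≤ rn := hrpos j hjU
  have hRr : rn + 1 ≤ Rn := hrkle j hij
  have hbound : (A.card : ℝ) / ((Rn : ℝ) - 1)
      ≤ ∑ p ∈ A, (1:ℝ) / (((P ∪ N).filter fun q => s p ≤ s q).card : ℝ) := by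
    have hconst : (A.card : ℝ) / ((Rn : ℝ) - 1) = ∑ _p ∈ A, (1:ℝ) / ((Rn : ℝ) - 1) := by
      rw [Finset.sum_const, nsmul_eq_mul, mul_one_div]
    rw [hconst]
    refine Finset.sum_le_sum fun p hp => ?_
    rcases mem_filter.mp hp with ⟨hpP₀, hip, _⟩
    have hpU : p ∈ P ∪ N := (hmem p hpP₀).1
    have hpos : 0 < ((P ∪ N).filter fun q => s p ≤ s q).card := hrpos p hpU
    have hle : ((P ∪ N).filter fun q => s p ≤ s q).card + 1 ≤ Rn := hrkle p hip
    refine one_div_le_one_div_of_le (by exact_mod_cast hpos) ?_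
    have : (((P ∪ N).filter fun q => s p ≤ s q).card : ℝ) + 1 ≤ (Rn : ℝ) := by
      exact_mod_cast hle
    linarith
  have hkey : ((Mn + A.card + 1 : ℕ) : ℝ) / (Rn : ℝ)
      ≤ ((Mn + 1 : ℕ) : ℝ) / (rn : ℝ)
        + ∑ p ∈ A, (1:ℝ) / (((P ∪ N).filter fun q => s p ≤ s q).card : ℝ) := by
    have h1 : ((Mn : ℝ) + (A.card : ℝ) + 1) / (Rn : ℝ)
        ≤ ((Mn : ℝ) + 1) / (rn : ℝ) + (A.card : ℝ) / ((Rn : ℝ) - 1) :=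
      aux_num16 _ _ _ _ (by positivity) (by positivity) (by exact_mod_cast hr1)
        (by exact_mod_cast hRr)
    push_cast
    linarith
  push_cast at hkey ⊢
  linarith
end
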